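/- arXiv:1406.6015 — 2 statements merged into one kernel-verified Lean document; each statement's English description precedes it below -/
import Mathlib

section
/- Let A be a binary m×n matrix and v, v' distinct vertices of the set covering polyhedron Q*(A) = conv{x ∈ ℤⁿ : Ax ≥ 1, x ≥ 0}. Suppose there exist d, d' ∈ ℝⁿ with 0 ≤ d ≤ v, 0 ≨ d', v·d' = 0, such that x = v − d + d' and x' = v' − d' + d both belong to Q*(A), x is binary, and x ≠ v'. Then v and v' are not adjacent in Q*(A). -/
open Finset

/-- Support of a vector. -/
def supp {n : ℕ} (x : Fin n → ℝ) : Set (Fin n) := {j | x j ≠ 0}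

/-- Support of the `t`-th row of a matrix. -/
def rowSupp {m n : ℕ} (A : Matrix (Fin m) (Fin n) ℝ) (t : Fin m) : Set (Fin n) :=
  {j | A t j ≠ 0}

def IsBinaryMatrix {m n : ℕ} (A : Matrix (Fin m) (Fin n) ℝ) : Prop :=
  ∀ t j, A t j = 0 ∨ A t j = 1

def IsBinaryVec {n : ℕ} (x : Fin n → ℝ) : Prop := ∀ j, x j = 0 ∨ x j = 1

/-- The polyhedron `{x | A x ≥ b, x ≥ 0}`. -/
def polyP {m n : ℕ} (A : Matrix (Fin m) (Fin n) ℝ) (b : Fin m → ℝ) : Set (Fin n → ℝ) :=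
  {x | (∀ i, b i ≤ ∑ j, A i j * x j) ∧ ∀ j, 0 ≤ x j}

/-- The linear relaxation `Q(A) = {x | A x ≥ 1, x ≥ 0}`. -/
def polyQ {m n : ℕ} (A : Matrix (Fin m) (Fin n) ℝ) : Set (Fin n → ℝ) :=
  {x | (∀ i, 1 ≤ ∑ j, A i j * x j) ∧ ∀ j, 0 ≤ x j}

/-- The set covering polyhedron `Q*(A)`: convex hull of nonnegative integer solutions of
`A x ≥ 1`. -/
def Qstar {m n : ℕ} (A : Matrix (Fin m) (Fin n) ℝ) : Set (Fin n → ℝ) :=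
  convexHull ℝ {x | (∀ j, ∃ k : ℕ, x j = k) ∧ ∀ i, 1 ≤ ∑ j, A i j * x j}

/-- A vertex of a convex set is an extreme point. -/
def IsVertex {n : ℕ} (S : Set (Fin n → ℝ)) (v : Fin n → ℝ) : Prop :=
  v ∈ S.extremePoints ℝ

/-- Two distinct vertices are adjacent when they lie on a common edge, i.e. the segment
joining them is a face (extreme subset) of `S`. -/
def AdjacentVerts {n : ℕ} (S : Set (Fin n → ℝ)) (v w : Fin n → ℝ) : Prop :=
  v ≠ w ∧ IsVertex S v ∧ IsVertex S w ∧ IsExtreme ℝ S (segment ℝ v w)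

/-- There is a row support `C` with `C ∩ supp v = {p}` and `C ∩ supp v' = {p'}`. -/
def jsgEdge {m n : ℕ} (A : Matrix (Fin m) (Fin n) ℝ) (v v' : Fin n → ℝ)
    (p p' : Fin n) : Prop :=
  ∃ t, rowSupp A t ∩ supp v = {p} ∧ rowSupp A t ∩ supp v' = {p'}

/-- The joint saturation graph of `v` and `v'` with respect to `A`. -/
def JSG {m n : ℕ} (A : Matrix (Fin m) (Fin n) ℝ) (v v' : Fin n → ℝ) :
    SimpleGraph (Fin n) where
  Adj p p' := p ≠ p' ∧ (jsgEdge A v v' p p' ∨ jsgEdge A v v' p' p)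
  symm := by constructor; intro p p' h; exact ⟨h.1.symm, h.2.symm⟩
  loopless := by constructor; intro p h; exact h.1 rfl

/-- The node set of the joint saturation graph: the symmetric difference of the supports. -/
def jsgNodes {n : ℕ} (v v' : Fin n → ℝ) : Set (Fin n) :=
  (supp v \ supp v') ∪ (supp v' \ supp v)

def JSGConnected {m n : ℕ} (A : Matrix (Fin m) (Fin n) ℝ) (v v' : Fin n → ℝ) : Prop :=
  ∀ p ∈ jsgNodes v v', ∀ q ∈ jsgNodes v v', (JSG A v v').Reachable p q

/-- One of the two partite sets is contained in a single connected component. -/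
def JSGPartiteConnected {m n : ℕ} (A : Matrix (Fin m) (Fin n) ℝ) (v v' : Fin n → ℝ) : Prop :=
  (∀ p ∈ supp v \ supp v', ∀ q ∈ supp v \ supp v', (JSG A v v').Reachable p q) ∨
  (∀ p ∈ supp v' \ supp v, ∀ q ∈ supp v' \ supp v, (JSG A v v').Reachable p q)

/-- Exactly two components, one of which is an isolated node. -/
def JSGAlmostConnected {m n : ℕ} (A : Matrix (Fin m) (Fin n) ℝ) (v v' : Fin n → ℝ) : Prop :=
  ∃ q ∈ jsgNodes v v', (∀ p, ¬ (JSG A v v').Adj q p) ∧ (jsgNodes v v' \ {q}).Nonempty ∧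
    ∀ p ∈ jsgNodes v v' \ {q}, ∀ r ∈ jsgNodes v v' \ {q}, (JSG A v v').Reachable p r

/-- The (directed) circular arc from `i` to `j` in `Fin n`. -/
def arc {n : ℕ} [NeZero n] (i j : Fin n) : Set (Fin n) :=
  {k | ∃ h : ℕ, h ≤ ((j - i : Fin n) : ℕ) ∧ k = i + (Fin.ofNat n h : Fin n)}

/-- A matrix is row circular if each row support is a circular arc. -/
def RowCircular {m n : ℕ} [NeZero n] (A : Matrix (Fin m) (Fin n) ℝ) : Prop :=
  ∀ t, ∃ i j : Fin n, rowSupp A t = arc i j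

/-- The standard assumptions: binary, no dominating rows, between 2 and n-1 ones per row,
no all-zero or all-one column. -/
def StandardAssumptions {m n : ℕ} (A : Matrix (Fin m) (Fin n) ℝ) : Prop :=
  IsBinaryMatrix A ∧
  (∀ s t : Fin m, s ≠ t → ¬ rowSupp A s ⊆ rowSupp A t) ∧
  (∀ t, 2 ≤ (rowSupp A t).ncard ∧ (rowSupp A t).ncard ≤ n - 1) ∧
  (∀ j : Fin n, (∃ t, A t j ≠ 0) ∧ (∃ t, A t j = 0))

/-- `a` and `b` occur consecutively (in either order) in the list `l`. -/
def ListConsec {α : Type*} (l : List α) (a b : α) : Prop :=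
  ∃ k : ℕ, (l[k]? = some a ∧ l[k+1]? = some b) ∨ (l[k]? = some b ∧ l[k+1]? = some a)

/-- `a` and `b` occur cyclically consecutively (in either order) in the list `l`. -/
def CycConsec {α : Type*} (l : List α) (a b : α) : Prop :=
  ∃ k : ℕ, k < l.length ∧
    ((l[k]? = some a ∧ l[(k+1) % l.length]? = some b) ∨
     (l[k]? = some b ∧ l[(k+1) % l.length]? = some a))

/-- The set `S` induces a path (possibly a single node) in `G`. -/
def IsPathOn {n : ℕ} (G : SimpleGraph (Fin n)) (S : Set (Fin n)) : Prop :=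
  ∃ l : List (Fin n), l.Nodup ∧ (∀ x, x ∈ S ↔ x ∈ l) ∧
    (∀ a b, a ∈ S → G.Adj a b → ListConsec l a b) ∧
    (∀ a b, ListConsec l a b → G.Adj a b)

/-- The set `S` induces a cycle in `G`. -/
def IsCycleOn {n : ℕ} (G : SimpleGraph (Fin n)) (S : Set (Fin n)) : Prop :=
  ∃ l : List (Fin n), 3 ≤ l.length ∧ l.Nodup ∧ (∀ x, x ∈ S ↔ x ∈ l) ∧
    (∀ a b, a ∈ S → G.Adj a b → CycConsec l a b) ∧
    (∀ a b, CycConsec l a b → G.Adj a b)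

/-- `p` and `q` are cyclically consecutive elements of `S`. -/
def CyclConsecIn {n : ℕ} [NeZero n] (S : Set (Fin n)) (p q : Fin n) : Prop :=
  p ≠ q ∧ p ∈ S ∧ q ∈ S ∧ (arc p q ∩ S = {p, q} ∨ arc q p ∩ S = {p, q})

/-- The circulant matrix `C(n,2)` with row supports `{t, t+1}` (mod n). -/
def Cn2 (n : ℕ) [NeZero n] : Matrix (Fin n) (Fin n) ℝ :=
  fun t j => if j = t ∨ j = t + 1 then 1 else 0

/-- Append a row to a matrix. -/
def appendRow {m n : ℕ} (A : Matrix (Fin m) (Fin n) ℝ) (a : Fin n → ℝ) :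
    Matrix (Fin (m+1)) (Fin n) ℝ :=
  fun t j => if h : (t : ℕ) < m then A ⟨t, h⟩ j else a j

/-- A set of points is integral if all its extreme points are integer vectors. -/
def IsIntegralSet {n : ℕ} (S : Set (Fin n → ℝ)) : Prop :=
  ∀ x ∈ S.extremePoints ℝ, ∀ j, ∃ z : ℤ, x j = z

/-- A binary matrix is minimally nonideal if `Q(A)` is not integral but both restrictions
`Q(A) ∩ {x_i = 0}` and `Q(A) ∩ {x_i = 1}` are integral for every coordinate `i`. -/
def MinimallyNonideal {m n : ℕ} (A : Matrix (Fin m) (Fin n) ℝ) : Prop :=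
  ¬ IsIntegralSet (polyQ A) ∧
  ∀ i : Fin n, IsIntegralSet (polyQ A ∩ {x | x i = 0}) ∧
               IsIntegralSet (polyQ A ∩ {x | x i = 1})

/-- The matrix of the degenerate projective plane with `t+1` points and lines. -/
def Jmat (t : ℕ) : Matrix (Fin (t+1)) (Fin (t+1)) ℝ :=
  fun i j => if i = 0 then (if j = 0 then 0 else 1) else (if j = 0 ∨ j = i then 1 else 0)

/-- `A` is isomorphic to some degenerate projective plane matrix `J_t`, `t ≥ 2`. -/
def IsoToDegenProjPlane {m n : ℕ} (A : Matrix (Fin m) (Fin n) ℝ) : Prop :=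
  ∃ t : ℕ, 2 ≤ t ∧ ∃ (σ : Fin m ≃ Fin (t+1)) (τ : Fin n ≃ Fin (t+1)),
    ∀ i j, A i j = Jmat t (σ i) (τ j)

/-- `A₁` is the core of `A`: a square nonsingular row submatrix with `r` ones per row and
per column, all other rows of `A` having more than `r` ones. -/
def IsCore {m n : ℕ} (A : Matrix (Fin m) (Fin n) ℝ) (A₁ : Matrix (Fin n) (Fin n) ℝ)
    (r : ℕ) : Prop :=
  2 ≤ r ∧ A₁.det ≠ 0 ∧
  (∃ f : Fin n → Fin m, Function.Injective f ∧ (∀ i, A₁ i = A (f i)) ∧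
    ∀ t, t ∉ Set.range f → r < (rowSupp A t).ncard) ∧
  (∀ i, (rowSupp A₁ i).ncard = r) ∧ (∀ j, {i | A₁ i j ≠ 0}.ncard = r)

/-- `B₁` is the core of the blocker of `A`: a square nonsingular matrix whose rows are
binary vertices of `Q*(A)` with `s` ones per row and per column, all other binary
vertices of `Q*(A)` having more than `s` ones. -/
def IsBlockerCore {m n : ℕ} (A : Matrix (Fin m) (Fin n) ℝ) (B₁ : Matrix (Fin n) (Fin n) ℝ)
    (s : ℕ) : Prop :=
  2 ≤ s ∧ B₁.det ≠ 0 ∧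
  (∀ i, IsBinaryVec (B₁ i) ∧ IsVertex (Qstar A) (B₁ i)) ∧
  Function.Injective (fun i => B₁ i) ∧
  (∀ i, (rowSupp B₁ i).ncard = s) ∧ (∀ j, {i | B₁ i j ≠ 0}.ncard = s) ∧
  (∀ x, IsBinaryVec x → IsVertex (Qstar A) x → (∀ i, x ≠ B₁ i) → s < (supp x).ncard)

/-- `w^i` for `n = 3ν`: the complement of the characteristic vector of the residue class
`i` mod 3. -/
def wVec (n : ℕ) (i : Fin 3) : Fin n → ℝ :=
  fun k => if (k : ℕ) % 3 = (i : ℕ) then 0 else 1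

/-- `a^i` for `n = 3ν`: the characteristic vector of the residue class `i` mod 3
(`a¹ = (1,0,0,1,0,0,…)` corresponds to `i = 0`). -/
def aVec (n : ℕ) (i : ℕ) : Fin n → ℝ :=
  fun k => if (k : ℕ) % 3 = i then 1 else 0


/-! If `[v, v']` were an edge, the exchange `x + x' = v + v'` with `x, x' ∈ Q*(A)` would put `x`
on it, the two pairs sharing their midpoint. At a coordinate where `d'` is positive, `v` vanishes
while the binary point `x` equals `1`; as the vertex `v'` is binary, this forces `x = v'`. -/

theorem IsExtreme.mem_segment_of_add_eq {E : Type*} [AddCommGroup E] [Module ℝ E]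
    {S : Set E} {v v' x x' : E} (hF : IsExtreme ℝ S (segment ℝ v v'))
    (hx : x ∈ S) (hx' : x' ∈ S) (hsum : x + x' = v + v') : x ∈ segment ℝ v v' := by
  have hmid : midpoint ℝ x x' = midpoint ℝ v v' := by
    rw [midpoint_eq_smul_add, midpoint_eq_smul_add, hsum]
  exact hF.left_mem_of_mem_openSegment hx hx' (midpoint_mem_segment v v')
    (hmid ▸ midpoint_mem_openSegment x x')

theorem eq_right_of_mem_segment_of_apply_eq_one {ι : Type*} {v v' x : ι → ℝ} {j : ι}
    (hx : x ∈ segment ℝ v v') (hvj : v j = 0) (hv'j : v' j = 0 ∨ v' j = 1) (hxj : x j = 1) :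
    x = v' := by
  obtain ⟨a, b, -, -, hab, rfl⟩ := hx
  have hbj : b * v' j = 1 := by simpa [hvj] using hxj
  have hb1 : b = 1 := by rcases hv'j with h | h <;> simp_all
  obtain rfl : a = 0 := by linarith
  simp [hb1]

theorem exists_apply_eq_zero_of_sum_mul_eq_zero {ι : Type*} [Fintype ι] {v w : ι → ℝ}
    (hv : ∀ j, 0 ≤ v j) (hw : ∀ j, 0 ≤ w j) (hw0 : w ≠ 0) (hvw : ∑ j, v j * w j = 0) :
    ∃ j, v j = 0 ∧ 0 < w j := by
  obtain ⟨j, hj⟩ := Function.ne_iff.mp hw0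
  have hterm : v j * w j = 0 :=
    (Finset.sum_eq_zero_iff_of_nonneg fun i _ => mul_nonneg (hv i) (hw i)).mp hvw j
      (mem_univ j)
  exact ⟨j, (mul_eq_zero.mp hterm).resolve_right hj, (hw j).lt_of_ne' hj⟩

section CoverPoints

variable {m n : ℕ} {A : Matrix (Fin m) (Fin n) ℝ}

def coverPoints (A : Matrix (Fin m) (Fin n) ℝ) : Set (Fin n → ℝ) :=
  {x | (∀ j, ∃ k : ℕ, x j = k) ∧ ∀ i, 1 ≤ ∑ j, A i j * x j}

theorem IsBinaryMatrix.nonneg (hA : IsBinaryMatrix A) (i : Fin m) (j : Fin n) : 0 ≤ A i j := by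
  rcases hA i j with h | h <;> simp [h]

theorem mem_coverPoints_of_isVertex {v : Fin n → ℝ} (hv : IsVertex (Qstar A) v) :
    v ∈ coverPoints A :=
  extremePoints_convexHull_subset hv

theorem mem_coverPoints_of_le (hA : ∀ i j, 0 ≤ A i j) {x y : Fin n → ℝ}
    (hx : x ∈ coverPoints A) (hy : ∀ j, ∃ k : ℕ, y j = k) (hxy : x ≤ y) :
    y ∈ coverPoints A :=
  ⟨hy, fun i => (hx.2 i).trans <|
    Finset.sum_le_sum fun j _ => mul_le_mul_of_nonneg_left (hxy j) (hA i j)⟩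

theorem nonneg_of_mem_coverPoints {x : Fin n → ℝ} (hx : x ∈ coverPoints A) (j : Fin n) :
    0 ≤ x j := by
  obtain ⟨k, hk⟩ := hx.1 j
  exact hk ▸ k.cast_nonneg

/-- Truncating a cover at `1` keeps it a cover: each row contains a column with a
positive entry of `x`, and that entry truncates to `1`. -/
theorem min_one_mem_coverPoints (hA : IsBinaryMatrix A) {x : Fin n → ℝ}
    (hx : x ∈ coverPoints A) : (fun j => min (x j) 1) ∈ coverPoints A := by
  refine ⟨fun j => ?_, fun i => ?_⟩
  · obtain ⟨k, hk⟩ := hx.1 j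
    exact ⟨min k 1, by simp [hk, Nat.cast_min]⟩
  · obtain ⟨j, hAj, hxj⟩ : ∃ j, A i j = 1 ∧ 1 ≤ x j := by
      by_contra! hcon
      have hzero : ∑ j, A i j * x j = 0 := Finset.sum_eq_zero fun j _ => by
        obtain ⟨k, hk⟩ := hx.1 j
        rcases hA i j with h | h
        · simp [h]
        · have hk1 : (k : ℝ) < 1 := hk ▸ hcon j h
          have hk0 : k = 0 := Nat.lt_one_iff.mp (by exact_mod_cast hk1)
          simp [hk, hk0]
      linarith [hx.2 i]
    calc (1 : ℝ) = A i j * min (x j) 1 := by simp [hAj, min_eq_right hxj]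
      _ ≤ ∑ j', A i j' * min (x j') 1 :=
        Finset.single_le_sum (f := fun j' => A i j' * min (x j') 1)
          (fun j' _ => mul_nonneg (hA.nonneg i j')
            (le_min (nonneg_of_mem_coverPoints hx j') zero_le_one)) (mem_univ j)

/-- A vertex `v` is the midpoint of the covers `min v 1` and `2 v - min v 1`, so it equals
its own truncation at `1`. -/
theorem IsBinaryMatrix.isBinaryVec_of_isVertex (hA : IsBinaryMatrix A) {v : Fin n → ℝ}
    (hv : IsVertex (Qstar A) v) : IsBinaryVec v := by
  have hvS := mem_coverPoints_of_isVertex hv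
  set c : Fin n → ℝ := fun j => min (v j) 1
  set w : Fin n → ℝ := fun j => 2 * v j - min (v j) 1
  have hcS : c ∈ coverPoints A := min_one_mem_coverPoints hA hvS
  have hwS : w ∈ coverPoints A := by
    refine mem_coverPoints_of_le hA.nonneg hvS (fun j => ?_) (fun j => ?_)
    · obtain ⟨k, hk⟩ := hvS.1 j
      refine ⟨2 * k - min k 1, ?_⟩
      have hle : min k 1 ≤ 2 * k := (min_le_left _ _).trans (by omega)
      simp only [w, hk]
      push_cast [Nat.cast_sub hle, Nat.cast_min]
      ring
    · simp only [w]; linarith [min_le_left (v j) 1]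
  have hmid : midpoint ℝ c w = v := by
    funext j
    simp only [midpoint_eq_smul_add, Pi.smul_apply, Pi.add_apply, smul_eq_mul, c, w]
    norm_num; ring
  have hcv : c = v := hv.2 (subset_convexHull ℝ _ hcS) (subset_convexHull ℝ _ hwS)
    (hmid ▸ midpoint_mem_openSegment c w)
  intro j
  obtain ⟨k, hk⟩ := hvS.1 j
  have hk1 : k ≤ 1 := by
    have : v j ≤ 1 := congrFun hcv j ▸ min_le_right _ _
    exact_mod_cast hk ▸ this
  interval_cases k <;> simp [hk]

end CoverPoints

theorem stmt1_general {m n : ℕ} (A : Matrix (Fin m) (Fin n) ℝ) (hA : IsBinaryMatrix A)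
    (v v' : Fin n → ℝ)
    (hv' : IsVertex (Qstar A) v')
    (d d' : Fin n → ℝ)
    (hd0 : ∀ j, 0 ≤ d j) (hdv : ∀ j, d j ≤ v j)
    (hd'0 : ∀ j, 0 ≤ d' j) (hd'ne : d' ≠ 0)
    (hvd' : ∑ j, v j * d' j = 0)
    (hx : v - d + d' ∈ Qstar A) (hx' : v' - d' + d ∈ Qstar A)
    (hxbin : IsBinaryVec (v - d + d')) (hxne : v - d + d' ≠ v') :
    ¬ AdjacentVerts (Qstar A) v v' := by
  rintro ⟨-, -, -, hF⟩
  have hxseg : v - d + d' ∈ segment ℝ v v' :=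
    hF.mem_segment_of_add_eq hx hx' (by abel)
  obtain ⟨j, hvj, hd'j⟩ := exists_apply_eq_zero_of_sum_mul_eq_zero
    (fun j => (hd0 j).trans (hdv j)) hd'0 hd'ne hvd'
  have hdj : d j = 0 := le_antisymm (hvj ▸ hdv j) (hd0 j)
  have hxj : (v - d + d') j = 1 :=
    (hxbin j).resolve_left (by simp [hvj, hdj, hd'j.ne'])
  exact hxne (eq_right_of_mem_segment_of_apply_eq_one hxseg hvj
    (hA.isBinaryVec_of_isVertex hv' j) hxj)

/-- the exchange argument showing non-adjacency in `Q*(A)`. -/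
theorem stmt1 {m n : ℕ} (A : Matrix (Fin m) (Fin n) ℝ) (hA : IsBinaryMatrix A)
    (v v' : Fin n → ℝ) (hne : v ≠ v')
    (hv : IsVertex (Qstar A) v) (hv' : IsVertex (Qstar A) v')
    (d d' : Fin n → ℝ)
    (hd0 : ∀ j, 0 ≤ d j) (hdv : ∀ j, d j ≤ v j)
    (hd'0 : ∀ j, 0 ≤ d' j) (hd'ne : d' ≠ 0)
    (hvd' : ∑ j, v j * d' j = 0)
    (hx : v - d + d' ∈ Qstar A) (hx' : v' - d' + d ∈ Qstar A)
    (hxbin : IsBinaryVec (v - d + d')) (hxne : v - d + d' ≠ v') :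
    ¬ AdjacentVerts (Qstar A) v v' :=
  stmt1_general A hA v v' hv' d d' hd0 hdv hd'0 hd'ne hvd' hx hx' hxbin hxne
end

section
/- Let A be a row circular binary matrix satisfying the standard assumptions and v, v' distinct vertices of Q*(A). If some connected component of the joint saturation graph G(v,v') is a cycle, then the node set of that cycle equals supp(v) ∪ supp(v'), so supp(v) ∩ supp(v') = ∅ and G(v,v') is connected. -/
open Finset

/-! Put `T = supp v ∪ supp v'`. A row `C` with `C ∩ supp v = {p}` and `C ∩ supp v' = {p'}` is a
circular arc meeting `T` only in `p` and `p'`, so every edge of `G(v,v')` joins two cyclically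
consecutive elements of `T`. A node of a cycle component has two distinct neighbours, and they
cannot both be its cyclic predecessor in `T`; so the component is closed under the cyclic
successor map of `T` and therefore contains all of `T`. A node of `supp v ∩ supp v'` has no
neighbours at all, hence the supports are disjoint and the graph is connected. -/

open Fin.NatCast

section CyclicSucc

variable {n : ℕ} [NeZero n]

lemma Fin.natCast_injOn_Ioc : Set.InjOn (Nat.cast : ℕ → Fin n) (Set.Ioc 0 n) := by
  rintro a ⟨ha, ha'⟩ b ⟨hb, hb'⟩ h
  have hmod : a % n = b % n := by simpa only [Fin.val_natCast] using congrArg Fin.val h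
  rcases ha'.lt_or_eq with ha' | rfl <;> rcases hb'.lt_or_eq with hb' | rfl <;>
    simp only [Nat.mod_self, Nat.mod_eq_of_lt, *] at hmod <;> omega

noncomputable def cyclicGap (T : Set (Fin n)) (q : Fin n) : ℕ :=
  sInf {d : ℕ | 0 < d ∧ q + (d : Fin n) ∈ T}

noncomputable def cyclicSucc (T : Set (Fin n)) (q : Fin n) : Fin n :=
  q + (cyclicGap T q : Fin n)

variable {T : Set (Fin n)} {q : Fin n}

lemma cyclicGap_le {d : ℕ} (hd : 0 < d) (h : q + (d : Fin n) ∈ T) : cyclicGap T q ≤ d :=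
  Nat.sInf_le ⟨hd, h⟩

lemma cyclicGap_pos_and_mem (hq : q ∈ T) : 0 < cyclicGap T q ∧ cyclicSucc T q ∈ T :=
  Nat.sInf_mem (s := {d : ℕ | 0 < d ∧ q + (d : Fin n) ∈ T})
    ⟨n, Nat.pos_of_neZero n, by rwa [Fin.natCast_self, add_zero]⟩

lemma cyclicSucc_eq_add {d : ℕ} (hd : 0 < d) (h : q + (d : Fin n) ∈ T)
    (hmin : ∀ e, 0 < e → e < d → q + (e : Fin n) ∉ T) : cyclicSucc T q = q + (d : Fin n) := by
  have hgap : cyclicGap T q = d :=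
    (cyclicGap_le hd h).antisymm <| le_csInf ⟨d, hd, h⟩ fun e ⟨he, heT⟩ =>
      not_lt.mp fun hlt => hmin e he hlt heT
  rw [cyclicSucc, hgap]

lemma Fin.eq_add_val_sub (x y : Fin n) : y = x + (((y - x : Fin n) : ℕ) : Fin n) := by
  rw [Fin.cast_val_eq_self]; abel

lemma cyclicSucc_injOn : Set.InjOn (cyclicSucc T) T := by
  intro x hx y hy hsucc
  by_contra hxy
  set e := ((y - x : Fin n) : ℕ)
  have he : 0 < e := Fin.pos_iff_ne_zero.mpr (sub_ne_zero.mpr (Ne.symm hxy))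
  have hen : e < n := (y - x).isLt
  have hyx : y = x + (e : Fin n) := Fin.eq_add_val_sub x y
  have hxy' : y + ((n - e : ℕ) : Fin n) = x := by
    rw [hyx, add_assoc, ← Nat.cast_add, Nat.add_sub_cancel' hen.le, Fin.natCast_self, add_zero]
  have hgx : cyclicGap T x ≤ e := cyclicGap_le he (hyx ▸ hy)
  have hgy : cyclicGap T y ≤ n - e := cyclicGap_le (by omega) (hxy' ▸ hx)
  have hgy0 := (cyclicGap_pos_and_mem hy).1
  have hcast : (cyclicGap T x : Fin n) = ((e + cyclicGap T y : ℕ) : Fin n) := by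
    apply add_left_cancel (a := x)
    rw [Nat.cast_add, ← add_assoc, ← hyx]
    exact hsucc
  have := Fin.natCast_injOn_Ioc ⟨(cyclicGap_pos_and_mem hx).1, by omega⟩ ⟨by omega, by omega⟩
    hcast
  omega

lemma cyclicSucc_eq_or_eq_of_ne {b c : Fin n} (hb : b ∈ T) (hc : c ∈ T)
    (hbc : b ≠ c) (hqb : cyclicSucc T q = b ∨ cyclicSucc T b = q)
    (hqc : cyclicSucc T q = c ∨ cyclicSucc T c = q) :
    cyclicSucc T q = b ∨ cyclicSucc T q = c := by
  rcases hqb with hqb | hbq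
  · exact .inl hqb
  rcases hqc with hqc | hcq
  · exact .inr hqc
  exact absurd (cyclicSucc_injOn hb hc (hbq.trans hcq.symm)) hbc

lemma subset_of_mapsTo_cyclicSucc {S : Set (Fin n)} {p : Fin n} (hST : S ⊆ T)
    (hS : Set.MapsTo (cyclicSucc T) S S) (hp : p ∈ S) : T ⊆ S := by
  classical
  suffices h : ∀ e : ℕ, p + (e : Fin n) ∈ T → p + (e : Fin n) ∈ S by
    intro x hx
    rw [Fin.eq_add_val_sub p x] at hx ⊢
    exact h _ hx
  intro e
  induction e using Nat.strong_induction_on with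
  | _ e ih =>
    intro he
    rcases Nat.eq_zero_or_pos e with rfl | he0
    · simpa using hp
    -- the last element of `T` strictly before `p + e`, seen from `p`
    set f := Nat.findGreatest (fun f => p + (f : Fin n) ∈ T) (e - 1)
    have hfT : p + (f : Fin n) ∈ T :=
      Nat.findGreatest_spec (P := fun f => p + (f : Fin n) ∈ T) (Nat.zero_le _)
        (by simpa using hST hp)
    have hfe : f < e := (Nat.findGreatest_le _).trans_lt (by omega)
    have hsucc : cyclicSucc T (p + (f : Fin n)) = p + (e : Fin n) := by
      have hcast : ∀ d : ℕ, p + (f : Fin n) + (d : Fin n) = p + ((f + d : ℕ) : Fin n) := by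
        intro d; rw [Nat.cast_add, add_assoc]
      rw [cyclicSucc_eq_add (d := e - f) (by omega) (by rwa [hcast, Nat.add_sub_cancel' hfe.le]),
        hcast, Nat.add_sub_cancel' hfe.le]
      intro d hd hdf hdT
      exact Nat.findGreatest_is_greatest (P := fun f => p + (f : Fin n) ∈ T) (n := e - 1)
        (k := f + d) (by omega) (by omega) (hcast d ▸ hdT)
    exact hsucc ▸ hS (ih f hfe hfT)

end CyclicSucc

section Arc

variable {n : ℕ} [NeZero n] {T : Set (Fin n)}

lemma cyclicSucc_eq_of_arc_inter_subset {a b x y : Fin n} {i j : ℕ} (hx : x = a + (i : Fin n))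
    (hy : y = a + (j : Fin n)) (hij : i < j) (hjb : j ≤ ((b - a : Fin n) : ℕ)) (hyT : y ∈ T)
    (hsub : arc a b ∩ T ⊆ {x, y}) : cyclicSucc T x = y := by
  have hjn : j < n := hjb.trans_lt (b - a).isLt
  have hxy : x + ((j - i : ℕ) : Fin n) = y := by
    rw [hx, hy, add_assoc, ← Nat.cast_add, Nat.add_sub_cancel' hij.le]
  rw [cyclicSucc_eq_add (by omega) (hxy ▸ hyT), hxy]
  intro d hd hdj hdT
  have harc : x + (d : Fin n) ∈ arc a b :=
    ⟨i + d, by omega, by rw [hx, add_assoc, ← Nat.cast_add]; rfl⟩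
  rcases hsub ⟨harc, hdT⟩ with h | h
  · have hd0 : (d : Fin n) = (n : Fin n) := by
      rw [Fin.natCast_self]; simpa using h
    have := Fin.natCast_injOn_Ioc ⟨hd, by omega⟩ ⟨Nat.pos_of_neZero n, le_rfl⟩ hd0
    omega
  · have := Fin.natCast_injOn_Ioc ⟨hd, by omega⟩ ⟨by omega, by omega⟩
      (add_left_cancel (h.trans hxy.symm))
    omega

lemma cyclicSucc_eq_or_of_arc_inter_subset {a b x y : Fin n} (hx : x ∈ arc a b ∩ T)
    (hy : y ∈ arc a b ∩ T) (hxy : x ≠ y) (hsub : arc a b ∩ T ⊆ {x, y}) :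
    cyclicSucc T x = y ∨ cyclicSucc T y = x := by
  obtain ⟨⟨i, hi, hxi⟩, hxT⟩ := hx
  obtain ⟨⟨j, hj, hyj⟩, hyT⟩ := hy
  rcases lt_trichotomy i j with hij | rfl | hji
  · exact .inl (cyclicSucc_eq_of_arc_inter_subset hxi hyj hij hj hyT hsub)
  · exact absurd (hxi.trans hyj.symm) hxy
  · exact .inr (cyclicSucc_eq_of_arc_inter_subset hyj hxi hji hi hxT (Set.pair_comm x y ▸ hsub))

end Arc

section JointSaturationGraph

variable {m n : ℕ} {A : Matrix (Fin m) (Fin n) ℝ} {v v' : Fin n → ℝ} {p p' : Fin n}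

lemma jsgEdge.mem_sdiff (h : jsgEdge A v v' p p') (hne : p ≠ p') :
    p ∈ supp v \ supp v' ∧ p' ∈ supp v' \ supp v := by
  obtain ⟨t, h, h'⟩ := h
  have hp : p ∈ rowSupp A t ∩ supp v := h ▸ rfl
  have hp' : p' ∈ rowSupp A t ∩ supp v' := h' ▸ rfl
  refine ⟨⟨hp.2, fun hpv' => hne ?_⟩, ⟨hp'.2, fun hp'v => hne ?_⟩⟩
  · exact h'.subset ⟨hp.1, hpv'⟩
  · exact (h.subset ⟨hp'.1, hp'v⟩).symm

lemma mem_jsgNodes_of_JSG_adj (h : (JSG A v v').Adj p p') : p ∈ jsgNodes v v' := by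
  obtain ⟨hne, h | h⟩ := h
  · exact .inl (h.mem_sdiff hne).1
  · exact .inr (h.mem_sdiff hne.symm).2

lemma jsgNodes_subset_union : jsgNodes v v' ⊆ supp v ∪ supp v' :=
  Set.union_subset_union Set.sdiff_subset Set.sdiff_subset

lemma jsgEdge.cyclicSucc_eq_or [NeZero n] (hcirc : RowCircular A) (h : jsgEdge A v v' p p')
    (hne : p ≠ p') :
    cyclicSucc (supp v ∪ supp v') p = p' ∨ cyclicSucc (supp v ∪ supp v') p' = p := by
  obtain ⟨t, h, h'⟩ := h
  obtain ⟨a, b, harc⟩ := hcirc t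
  rw [harc] at h h'
  have hp : p ∈ arc a b ∩ supp v := h ▸ rfl
  have hp' : p' ∈ arc a b ∩ supp v' := h' ▸ rfl
  refine cyclicSucc_eq_or_of_arc_inter_subset ⟨hp.1, .inl hp.2⟩ ⟨hp'.1, .inr hp'.2⟩ hne ?_
  rw [Set.inter_union_distrib_left, h, h', Set.singleton_union]

lemma cyclicSucc_eq_or_of_JSG_adj [NeZero n] (hcirc : RowCircular A)
    (h : (JSG A v v').Adj p p') :
    cyclicSucc (supp v ∪ supp v') p = p' ∨ cyclicSucc (supp v ∪ supp v') p' = p := by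
  obtain ⟨hne, h | h⟩ := h
  · exact h.cyclicSucc_eq_or hcirc hne
  · exact (h.cyclicSucc_eq_or hcirc hne.symm).symm

end JointSaturationGraph

lemma IsCycleOn.exists_adj_adj_ne {n : ℕ} {G : SimpleGraph (Fin n)} {S : Set (Fin n)}
    (h : IsCycleOn G S) {q : Fin n} (hq : q ∈ S) : ∃ b c, b ≠ c ∧ G.Adj q b ∧ G.Adj q c := by
  obtain ⟨l, hlen, hnd, hmem, -, hcc⟩ := h
  obtain ⟨k, hk, rfl⟩ := List.getElem_of_mem ((hmem q).1 hq)
  have hsucc : ∀ i < l.length, (i + 1) % l.length = if i + 1 = l.length then 0 else i + 1 := by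
    intro i hi
    split_ifs with h
    · rw [h, Nat.mod_self]
    · exact Nat.mod_eq_of_lt (by omega)
  obtain ⟨j, hj, hjk, hkj⟩ :
      ∃ j < l.length, (j + 1) % l.length = k ∧ (k + 1) % l.length ≠ j := by
    rcases Nat.eq_zero_or_pos k with rfl | hk0
    · refine ⟨l.length - 1, by omega, ?_, ?_⟩ <;> rw [hsucc _ (by omega)] <;> split_ifs <;> omega
    · refine ⟨k - 1, by omega, ?_, ?_⟩ <;> rw [hsucc _ (by omega)] <;> split_ifs <;> omega
  have hk' : (k + 1) % l.length < l.length := Nat.mod_lt _ (by omega)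
  refine ⟨l[(k + 1) % l.length], l[j], by rwa [Ne, hnd.getElem_inj_iff], ?_, ?_⟩
  · exact hcc _ _ ⟨k, hk, .inl ⟨List.getElem?_eq_getElem hk, List.getElem?_eq_getElem hk'⟩⟩
  · refine hcc _ _ ⟨j, hj, .inr ⟨List.getElem?_eq_getElem hj, ?_⟩⟩
    rw [hjk, List.getElem?_eq_getElem hk]

theorem stmt7_general {m n : ℕ} [NeZero n] (A : Matrix (Fin m) (Fin n) ℝ)
    (hcirc : RowCircular A)
    (v v' : Fin n → ℝ) :
    ∀ p ∈ jsgNodes v v',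
      IsCycleOn (JSG A v v') {q | (JSG A v v').Reachable p q} →
        {q | (JSG A v v').Reachable p q} = supp v ∪ supp v' ∧
        supp v ∩ supp v' = ∅ ∧ JSGConnected A v v' := by
  intro p _ hcyc
  set S := {q | (JSG A v v').Reachable p q}
  have hS_nodes : S ⊆ jsgNodes v v' := fun q hq =>
    let ⟨_, _, _, hqb, _⟩ := hcyc.exists_adj_adj_ne hq
    mem_jsgNodes_of_JSG_adj hqb
  have hS : Set.MapsTo (cyclicSucc (supp v ∪ supp v')) S S := fun q hq => by
    obtain ⟨b, c, hbc, hqb, hqc⟩ := hcyc.exists_adj_adj_ne hq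
    have hT : ∀ {r}, (JSG A v v').Adj q r → r ∈ supp v ∪ supp v' := fun hr =>
      jsgNodes_subset_union (mem_jsgNodes_of_JSG_adj hr.symm)
    rcases cyclicSucc_eq_or_eq_of_ne (hT hqb) (hT hqc) hbc
      (cyclicSucc_eq_or_of_JSG_adj hcirc hqb) (cyclicSucc_eq_or_of_JSG_adj hcirc hqc)
      with h | h <;> rw [h]
    exacts [hq.trans hqb.reachable, hq.trans hqc.reachable]
  have hTS : supp v ∪ supp v' ⊆ S :=
    subset_of_mapsTo_cyclicSucc (hS_nodes.trans jsgNodes_subset_union) hS .rfl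
  refine ⟨(hS_nodes.trans jsgNodes_subset_union).antisymm hTS, ?_, fun x hx y hy => ?_⟩
  · refine Set.eq_empty_of_forall_notMem fun j ⟨hj, hj'⟩ => ?_
    rcases hS_nodes (hTS (.inl hj)) with h | h
    exacts [h.2 hj', h.2 hj]
  · exact (hTS (jsgNodes_subset_union hx)).symm.trans (hTS (jsgNodes_subset_union hy))

/-- for row circular `A`, a cycle component of the joint saturation graph
exhausts `supp v ∪ supp v'`; in particular the supports are disjoint and the graph is
connected. -/
theorem stmt7 {m n : ℕ} [NeZero n] (A : Matrix (Fin m) (Fin n) ℝ)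
    (hstd : StandardAssumptions A) (hcirc : RowCircular A)
    (v v' : Fin n → ℝ) (hne : v ≠ v')
    (hv : IsVertex (Qstar A) v) (hv' : IsVertex (Qstar A) v') :
    ∀ p ∈ jsgNodes v v',
      IsCycleOn (JSG A v v') {q | (JSG A v v').Reachable p q} →
        {q | (JSG A v v').Reachable p q} = supp v ∪ supp v' ∧
        supp v ∩ supp v' = ∅ ∧ JSGConnected A v v' :=
  stmt7_general A hcirc v v'
end
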